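/- Under the hypotheses of the split-minimization rate theorem, assume in addition: ψ is strictly increasing with inverse ψ⁻¹ on its range; ψ(t) ≥ c_ψ·t for all t > 0; Δ_ξ(x̌, x†) ≥ c_s·‖x̌ − x†‖^s for all x̌ ∈ X̌ for some s ≥ 1, c_s > 0; and C̄_Q·Q(r̂₁, r̂₂)^p ≥ max{‖(I−P)(r⁻¹(r̂₂)) − (I−P)(r⁻¹(r̂₁))‖^s, c_ψ·C_P·‖P(r⁻¹(r̂₂)) − P(r⁻¹(r̂₁))‖^p} for all r̂₁, r̂₂ ∈ X̃. Let ω := (−ψ)*(−1/(2C̄α)) with C̄ := 2^{2p−2}·C_ψ. Then there are constants C, C' > 0 depending only on p, s, b, γ, c_s, c_ψ, C_ψ, C_P, C̃_Q, C̄_Q, C_η, τ̲, τ̄, β such that, whenever C·ω lies in the range of ψ, the split-minimization pair satisfies ‖x_sm − x†‖ ≤ C'·(ω^{1/s} + ω^{1/p} + ψ⁻¹(C·ω)^{1/p}). -/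

import Mathlib

/-- The convex conjugate of `-ψ`: `(-ψ)*(s) = sup_{t ≥ 0} (s·t + ψ(t)) ∈ [0,∞]`. -/
noncomputable def negConj (ψ : ℝ → ℝ) (s : ℝ) : EReal :=
  ⨆ t : {t : ℝ // 0 ≤ t}, ((s * t.1 + ψ t.1 : ℝ) : EReal)

universe u v w

/-!
Comparing `Jα rsm` with `Jα (r xd)` and using the variational source condition, the
quasi-subadditivity of `ψ` and the Fenchel–Young inequality `ψ T ≤ T / (2 Cb α) + ω` bounds both
the Bregman distance of `Ip (rinv rsm)` to `xd` and `ψ (CP ‖P (rinv rsm)‖ ^ p)` by a multiple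
of `ω`; the parameter choice `τl δ ^ p ≤ α ω` absorbs the noise. Comparing `Jβ rsm xsm` with
`Jβ rsm xd` transfers this bound to `Q (r xsm) rsm ^ p` and `‖P xsm‖ ^ p`. The `s`-convexity of the
Bregman distance and the lower bound on `Q` then control the three pieces of
`xsm - xd = P xsm + (Ip xsm - Ip (rinv rsm)) + (Ip (rinv rsm) - xd)`.
-/

open Set

lemma Real.rpow_add_le_mul_rpow_add_rpow {a c p : ℝ} (ha : 0 ≤ a) (hc : 0 ≤ c) (hp : 1 ≤ p) :
    (a + c) ^ p ≤ 2 ^ (p - 1) * (a ^ p + c ^ p) := by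
  exact_mod_cast NNReal.rpow_add_le_mul_rpow_add_rpow ⟨a, ha⟩ ⟨c, hc⟩ hp

lemma Real.rpow_le_of_le_add_add {a M d e p : ℝ} (hp : 1 ≤ p) (ha : 0 ≤ a) (hM : 0 ≤ M)
    (hd : 0 ≤ d) (he : 0 ≤ e) (h : a ≤ M + (d + e)) :
    a ^ p ≤ 2 ^ (p - 1) * M ^ p + 2 ^ (2 * p - 2) * (d ^ p + e ^ p) := by
  have htwo : (2 : ℝ) ^ (2 * p - 2) = 2 ^ (p - 1) * 2 ^ (p - 1) := by
    rw [← Real.rpow_add two_pos]; ring_nf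
  have hde := Real.rpow_add_le_mul_rpow_add_rpow hd he hp
  calc a ^ p ≤ (M + (d + e)) ^ p := by gcongr
    _ ≤ 2 ^ (p - 1) * (M ^ p + (d + e) ^ p) :=
      Real.rpow_add_le_mul_rpow_add_rpow hM (by positivity) hp
    _ ≤ 2 ^ (p - 1) * (M ^ p + 2 ^ (p - 1) * (d ^ p + e ^ p)) := by gcongr
    _ = _ := by rw [htwo]; ring

lemma Real.le_rpow_one_div_mul_of_rpow_le {a c ω q : ℝ} (ha : 0 ≤ a) (hc : 0 ≤ c) (hω : 0 ≤ ω)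
    (hq : 0 < q) (h : a ^ q ≤ c * ω) : a ≤ c ^ (1 / q) * ω ^ (1 / q) := by
  rw [← Real.mul_rpow hc hω, one_div]
  exact (Real.le_rpow_inv_iff_of_pos ha (by positivity) hq).mpr h

lemma EReal.ne_top_of_coe_mul_le {α b : ℝ} {x : EReal} (hα : 0 < α) (h : (α : EReal) * x ≤ b) :
    x ≠ ⊤ := by
  rintro rfl
  rw [EReal.mul_top_of_pos (by exact_mod_cast hα)] at h
  exact (EReal.coe_lt_top b).not_ge h

lemma EReal.le_mul_toReal_of_le_coe_mul {a α b : ℝ} {x : EReal} (h : (a : EReal) ≤ α * x)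
    (h' : (α : EReal) * x ≤ b) : a ≤ α * x.toReal := by
  have := EReal.toReal_le_toReal h (EReal.coe_ne_bot a)
    (ne_top_of_le_ne_top (EReal.coe_ne_top b) h')
  rwa [EReal.toReal_coe, EReal.toReal_mul, EReal.toReal_coe] at this

lemma coe_le_negConj (ψ : ℝ → ℝ) (s : ℝ) {t : ℝ} (ht : 0 ≤ t) :
    ((s * t + ψ t : ℝ) : EReal) ≤ negConj ψ s :=
  le_iSup (fun t : {t : ℝ // 0 ≤ t} => ((s * t.1 + ψ t.1 : ℝ) : EReal)) ⟨t, ht⟩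

lemma negConj_nonneg {ψ : ℝ → ℝ} (hψ0 : ψ 0 = 0) (s : ℝ) : 0 ≤ negConj ψ s := by
  simpa [hψ0] using coe_le_negConj ψ s le_rfl

lemma le_mul_add_toReal_negConj {ψ : ℝ → ℝ} {c t : ℝ} (hfin : negConj ψ (-c) ≠ ⊤) (ht : 0 ≤ t) :
    ψ t ≤ c * t + (negConj ψ (-c)).toReal := by
  have := EReal.toReal_le_toReal (coe_le_negConj ψ (-c) ht) (EReal.coe_ne_bot _) hfin
  rw [EReal.toReal_coe] at this
  linarith

lemma eq_of_norm_le_mul_norm_sub_of_neg {E F : Type*} [SeminormedAddCommGroup E]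
    [NormedAddCommGroup F] {a : E} {x y : F} {L : ℝ} (hL : L < 0) (h : ‖a‖ ≤ L * ‖x - y‖) :
    x = y := by
  by_contra hxy
  have := norm_sub_pos_iff.mpr hxy
  nlinarith [norm_nonneg a]

lemma ContinuousLinearMap.norm_map_sub_rpow_le {E F : Type*} [SeminormedAddCommGroup E]
    [NormedSpace ℝ E] [SeminormedAddCommGroup F] [NormedSpace ℝ F] (K : E →L[ℝ] F)
    {p L CP B δ : ℝ} (hp : 1 ≤ p) (hL : 0 ≤ L) (hB : 0 ≤ B)
    (hCP : 2 ^ (p - 1) * ‖K‖ ^ p * L ^ p ≤ CP) {a v w : E} {y : F}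
    (hav : ‖a - v‖ ≤ L * B) (hw : ‖K w - y‖ ≤ δ) :
    ‖K (a - w)‖ ^ p ≤ 2 ^ (2 * p - 2) * (‖K v - y‖ ^ p + δ ^ p) + CP * B ^ p := by
  have hsplit : K (a - w) = K (a - v) + ((K v - y) - (K w - y)) := by
    simp only [map_sub]; abel
  have hnorm : ‖K (a - w)‖ ≤ ‖K‖ * (L * B) + (‖K v - y‖ + δ) := by
    rw [hsplit]
    refine (norm_add_le _ _).trans (add_le_add ?_ ((norm_sub_le _ _).trans (by gcongr)))
    exact (K.le_opNorm _).trans (by gcongr)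
  have hKLB : 2 ^ (p - 1) * (‖K‖ * (L * B)) ^ p ≤ CP * B ^ p := by
    rw [Real.mul_rpow (norm_nonneg K) (by positivity), Real.mul_rpow hL hB]
    calc 2 ^ (p - 1) * (‖K‖ ^ p * (L ^ p * B ^ p)) = 2 ^ (p - 1) * ‖K‖ ^ p * L ^ p * B ^ p := by
          ring
      _ ≤ CP * B ^ p := by gcongr
  have := Real.rpow_le_of_le_add_add hp (norm_nonneg _) (by positivity) (norm_nonneg _)
    ((norm_nonneg _).trans hw) hnorm
  linarith

lemma norm_sub_le_of_rpow_le {E : Type*} [SeminormedAddCommGroup E] {x a b xc xd : E}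
    {p s ω c₁ c₂ c₃ : ℝ} (hp : 0 < p) (hs : 0 < s) (hω : 0 ≤ ω) (hc₁ : 0 ≤ c₁) (hc₂ : 0 ≤ c₂)
    (hc₃ : 0 ≤ c₃) (ha : a = x - b) (h₁ : ‖xc - xd‖ ^ s ≤ c₁ * ω) (h₂ : ‖b - xc‖ ^ s ≤ c₂ * ω)
    (h₃ : ‖a‖ ^ p ≤ c₃ * ω) :
    ‖x - xd‖ ≤ (c₁ ^ (1 / s) + c₂ ^ (1 / s) + c₃ ^ (1 / p)) * (ω ^ (1 / s) + ω ^ (1 / p)) := by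
  have h₁' := Real.le_rpow_one_div_mul_of_rpow_le (norm_nonneg _) hc₁ hω hs h₁
  have h₂' := Real.le_rpow_one_div_mul_of_rpow_le (norm_nonneg _) hc₂ hω hs h₂
  have h₃' := Real.le_rpow_one_div_mul_of_rpow_le (norm_nonneg _) hc₃ hω hp h₃
  have : 0 ≤ c₁ ^ (1 / s) * ω ^ (1 / p) := by positivity
  have : 0 ≤ c₂ ^ (1 / s) * ω ^ (1 / p) := by positivity
  have : 0 ≤ c₃ ^ (1 / p) * ω ^ (1 / s) := by positivity
  calc ‖x - xd‖ = ‖a + (b - xc) + (xc - xd)‖ := by rw [ha]; abel_nf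
    _ ≤ ‖a‖ + ‖b - xc‖ + ‖xc - xd‖ := norm_add₃_le
    _ ≤ _ := by linarith

lemma psi_le_of_le_mul_add {ψ : ℝ → ℝ} {Cψ k α ω A T Z : ℝ} (hCψ : 0 < Cψ) (hk : 0 < k)
    (hα : 0 < α) (hψmono : MonotoneOn ψ (Ici 0))
    (hψsub : ∀ a c : ℝ, 0 ≤ a → 0 ≤ c → ψ (a + c) ≤ Cψ * (ψ a + ψ c))
    (hYoung : ∀ t, 0 ≤ t → ψ t ≤ 1 / (2 * (k * Cψ) * α) * t + ω)
    (hA0 : 0 ≤ A) (hT : 0 ≤ T) (hZ : 0 ≤ Z) (hA : A ≤ k * T + Z) :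
    ψ A ≤ Cψ * ψ Z + T / (2 * α) + Cψ * ω := by
  have hkT : 0 ≤ k * T := by positivity
  have hscale : Cψ * (1 / (2 * (k * Cψ) * α) * (k * T)) = T / (2 * α) := by
    field_simp
  calc ψ A ≤ ψ (k * T + Z) := hψmono hA0 (by simp only [mem_Ici]; positivity) hA
    _ ≤ Cψ * (ψ (k * T) + ψ Z) := hψsub _ _ hkT hZ
    _ ≤ Cψ * (1 / (2 * (k * Cψ) * α) * (k * T) + ω + ψ Z) := by
      gcongr; exact hYoung _ hkT
    _ = Cψ * ψ Z + T / (2 * α) + Cψ * ω := by rw [← hscale]; ring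

lemma bregman_add_penalty_le {b γ Cψ Cη τl α ω Δ Ψ ψA D E η ρ R : ℝ} (hb : b < 1) (hγ : Cψ < γ)
    (hCη : 0 ≤ Cη) (hτl : 0 < τl) (hα : 0 < α) (hΔ : 0 ≤ Δ) (hΨ : 0 ≤ Ψ) (hD : 0 ≤ D)
    (hmin : D + α * (ρ + R) ≤ E + η) (hvsc : (1 - b) * Δ - ψA ≤ ρ)
    (hψA : ψA ≤ Cψ * Ψ + (D + E) / (2 * α) + Cψ * ω) (hR : γ * Ψ ≤ R)
    (hE : τl * E ≤ α * ω) (hη : η ≤ Cη * E) :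
    Δ + Ψ ≤ ((3 / 2 + Cη) / τl + Cψ) / min (1 - b) (γ - Cψ) * ω := by
  have hm : 0 < min (1 - b) (γ - Cψ) := lt_min (by linarith) (by linarith)
  have hweighted : α * ((1 - b) * Δ + (γ - Cψ) * Ψ) ≤ 3 / 2 * E + η + α * (Cψ * ω) := by
    have h2α : α * ((D + E) / (2 * α)) = (D + E) / 2 := by field_simp
    nlinarith [mul_le_mul_of_nonneg_left hvsc hα.le, mul_le_mul_of_nonneg_left hψA hα.le,
      mul_le_mul_of_nonneg_left hR hα.le]
  have hmin_le : min (1 - b) (γ - Cψ) * (Δ + Ψ) ≤ (1 - b) * Δ + (γ - Cψ) * Ψ := by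
    nlinarith [min_le_left (1 - b) (γ - Cψ), min_le_right (1 - b) (γ - Cψ)]
  have hEω : (3 / 2 + Cη) * E ≤ (3 / 2 + Cη) / τl * (α * ω) := by
    rw [div_mul_eq_mul_div, le_div_iff₀ hτl]; nlinarith
  rw [div_mul_eq_mul_div, le_div_iff₀ hm, mul_comm]
  nlinarith

section FirstStep

variable {X Xt Y : Type*} [NormedAddCommGroup X] [NormedAddCommGroup Xt]
  [NormedSpace ℝ Xt] [NormedAddCommGroup Y] [NormedSpace ℝ Y]
  {U : Set X} {x0 xd : X} {F : X → Y} {K : Xt →L[ℝ] Y} {r : X → Xt} {rinv : Xt → X}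
  {P Ip : X → X} {Rc RP ξ : X → ℝ} {ψ : ℝ → ℝ} {yδ : Y} {rsm : Xt}
  {p δ α η ω : ℝ}

lemma data_fit_add_penalty_le {Jα : Xt → ℝ} (hp : 0 ≤ p) (hrxd : rinv (r xd) = xd)
    (hRIxd : F xd - F x0 = K (r xd)) (hIpxd : Ip xd = xd) (hPxd : P xd = 0) (hRP0 : RP 0 = 0)
    (hnoise : ‖F xd - yδ‖ ≤ δ)
    (hJα : ∀ v, Jα v = ‖K v + F x0 - yδ‖ ^ p + α * (Rc (Ip (rinv v)) + RP (P (rinv v))))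
    (hmin : Jα rsm ≤ Jα (r xd) + η) :
    ‖K rsm + F x0 - yδ‖ ^ p + α * (Rc (Ip (rinv rsm)) - Rc xd + RP (P (rinv rsm))) ≤
      δ ^ p + η := by
  rw [hJα, hJα, hrxd, hIpxd, hPxd, hRP0, ← hRIxd, sub_add_cancel] at hmin
  have := Real.rpow_le_rpow (norm_nonneg _) hnoise hp
  linarith

lemma forward_residual_rpow_le {Lr CP : ℝ} (hp : 1 ≤ p) (hLr0 : 0 ≤ Lr)
    (hLr : ∀ x1 ∈ U, ∀ x2 ∈ U, ‖r x1 - r x2‖ ≤ Lr * ‖x1 - x2‖)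
    (hCP : 2 ^ (p - 1) * ‖K‖ ^ p * Lr ^ p ≤ CP) {u : X} (hu : u ∈ U) (hIpu : Ip u ∈ U)
    (hPu : P u = u - Ip u) (hRIxd : F xd - F x0 = K (r xd)) (hnoise : ‖F xd - yδ‖ ≤ δ) :
    ‖K (r (Ip u) - r xd)‖ ^ p ≤
      2 ^ (2 * p - 2) * (‖K (r u) + F x0 - yδ‖ ^ p + δ ^ p) + CP * ‖P u‖ ^ p := by
  have hLu : ‖r (Ip u) - r u‖ ≤ Lr * ‖P u‖ := by
    rw [hPu, norm_sub_rev u]; exact hLr _ hIpu _ hu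
  have hw : ‖K (r xd) - (yδ - F x0)‖ ≤ δ := by
    rwa [← hRIxd, sub_sub_eq_add_sub, sub_add_cancel]
  simpa only [sub_sub_eq_add_sub] using K.norm_map_sub_rpow_le hp hLr0 (norm_nonneg _) hCP hLu hw

lemma tikhonov_step_rate {b γ Cψ Cη τl Lr CP : ℝ} {Jα : Xt → ℝ} (hp : 1 ≤ p) (hb : b < 1)
    (hCψ : 0 < Cψ) (hγ : Cψ < γ) (hCη : 0 ≤ Cη) (hτl : 0 < τl) (hα : 0 < α) (hLr0 : 0 ≤ Lr)
    (hLr : ∀ x1 ∈ U, ∀ x2 ∈ U, ‖r x1 - r x2‖ ≤ Lr * ‖x1 - x2‖)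
    (hCP : 2 ^ (p - 1) * ‖K‖ ^ p * Lr ^ p ≤ CP) (hrxd : rinv (r xd) = xd)
    (hrmem : rinv rsm ∈ U) (hrright : r (rinv rsm) = rsm)
    (hRIxd : F xd - F x0 = K (r xd)) (hPIp : ∀ x, P x = x - Ip x) (hPxd : P xd = 0)
    (hIpU : Ip (rinv rsm) ∈ U) (hnoise : ‖F xd - yδ‖ ≤ δ)
    (hξ : ξ (Ip (rinv rsm) - xd) ≤ Rc (Ip (rinv rsm)) - Rc xd)
    (hψmono : MonotoneOn ψ (Ici 0)) (hψnn : ∀ t, 0 ≤ t → 0 ≤ ψ t)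
    (hψsub : ∀ a c : ℝ, 0 ≤ a → 0 ≤ c → ψ (a + c) ≤ Cψ * (ψ a + ψ c))
    (hYoung : ∀ T, 0 ≤ T → ψ T ≤ 1 / (2 * (2 ^ (2 * p - 2) * Cψ) * α) * T + ω)
    (hVSC : -ξ (Ip (rinv rsm) - xd) ≤ b * (Rc (Ip (rinv rsm)) - Rc xd - ξ (Ip (rinv rsm) - xd)) +
      ψ (‖K (r (Ip (rinv rsm)) - r xd)‖ ^ p))
    (hRP0 : RP 0 = 0) (hRPlb : γ * ψ (CP * ‖P (rinv rsm)‖ ^ p) ≤ RP (P (rinv rsm)))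
    (hJα : ∀ v, Jα v = ‖K v + F x0 - yδ‖ ^ p + α * (Rc (Ip (rinv v)) + RP (P (rinv v))))
    (hmin : Jα rsm ≤ Jα (r xd) + η) (hδω : τl * δ ^ p ≤ α * ω) (hη : η ≤ Cη * δ ^ p) :
    Rc (Ip (rinv rsm)) - Rc xd - ξ (Ip (rinv rsm) - xd) + ψ (CP * ‖P (rinv rsm)‖ ^ p) ≤
      ((3 / 2 + Cη) / τl + Cψ) / min (1 - b) (γ - Cψ) * ω := by
  have hIpxd : Ip xd = xd := (sub_eq_zero.mp ((hPIp xd).symm.trans hPxd)).symm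
  have hfit := data_fit_add_penalty_le (by linarith) hrxd hRIxd hIpxd hPxd hRP0 hnoise hJα hmin
  have hres := forward_residual_rpow_le hp hLr0 hLr hCP hrmem hIpU (hPIp _) hRIxd hnoise
  rw [hrright] at hres
  have hCP0 : 0 ≤ CP := le_trans (by positivity) hCP
  have hδ : 0 ≤ δ := (norm_nonneg _).trans hnoise
  exact bregman_add_penalty_le hb hγ hCη hτl hα (by linarith) (hψnn _ (by positivity))
    (by positivity) hfit (by linarith)
    (psi_le_of_le_mul_add hCψ (by positivity) hα hψmono hψsub hYoung
      (by positivity) (by positivity) (by positivity) hres) hRPlb hδω hη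

end FirstStep

section SecondStep

variable {X Xt : Type*} [NormedAddCommGroup X] {xd : X} {r : X → Xt} {rinv : Xt → X}
  {P Ip : X → X} {rsm : Xt} {p η ω : ℝ}

lemma reconstruction_step_rate {Q : Xt → Xt → ℝ} {Jβ : Xt → X → ℝ} {xsm : X}
    {s α β κ Cη τl δ cs CtQ CbarQ Δ Ψ : ℝ} (hp : 0 < p) (hs : 0 < s) (hβ : 0 < β) (hκ : 0 ≤ κ)
    (hCη : 0 ≤ Cη) (hτl : 0 < τl) (hcs : 0 < cs) (hCtQ : 0 ≤ CtQ) (hCbarQ : 0 ≤ CbarQ)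
    (hω : 0 ≤ ω) (hPIp : ∀ x, P x = x - Ip x) (hPxd : P xd = 0)
    (hxsm : rinv (r xsm) = xsm)
    (hQnn : ∀ v1 v2, 0 ≤ Q v1 v2) (hΨ : 0 ≤ Ψ) (hrate : Δ + Ψ ≤ κ * ω)
    (hsconv : cs * ‖Ip (rinv rsm) - xd‖ ^ s ≤ Δ) (hQt : Q (r xd) rsm ^ p ≤ CtQ * (Δ + Ψ))
    (hQbar : ‖Ip (rinv rsm) - Ip (rinv (r xsm))‖ ^ s ≤ CbarQ * Q (r xsm) rsm ^ p)
    (hJβ : ∀ v x, Jβ v x = β * Q (r x) v ^ p + ‖P x‖ ^ p)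
    (hmin : Jβ rsm xsm ≤ Jβ rsm xd + η) (hη : η ≤ Cη * δ ^ p) (hδω : τl * δ ^ p ≤ α * ω)
    (hαβ : α ≤ β) :
    ‖xsm - xd‖ ≤ ((κ / cs) ^ (1 / s) + (CbarQ * (CtQ * κ + Cη / τl)) ^ (1 / s) +
      (β * (CtQ * κ + Cη / τl)) ^ (1 / p)) * (ω ^ (1 / s) + ω ^ (1 / p)) := by
  rw [hJβ, hJβ, hPxd, norm_zero, Real.zero_rpow hp.ne', add_zero] at hmin
  have hηω : η ≤ β * (Cη / τl) * ω := calc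
    η ≤ Cη * δ ^ p := hη
    _ = Cη / τl * (τl * δ ^ p) := by field_simp
    _ ≤ Cη / τl * (β * ω) :=
      mul_le_mul_of_nonneg_left (hδω.trans (mul_le_mul_of_nonneg_right hαβ hω)) (by positivity)
    _ = β * (Cη / τl) * ω := by ring
  have hQxd : Q (r xd) rsm ^ p ≤ CtQ * κ * ω := by
    rw [mul_assoc]; exact hQt.trans (by gcongr)
  have hβQ := mul_le_mul_of_nonneg_left hQxd hβ.le
  have hQ0 := Real.rpow_nonneg (hQnn (r xsm) rsm) p
  have hP0 := Real.rpow_nonneg (norm_nonneg (P xsm)) p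
  have hQsm : Q (r xsm) rsm ^ p ≤ (CtQ * κ + Cη / τl) * ω :=
    le_of_mul_le_mul_left (by linarith) hβ
  refine norm_sub_le_of_rpow_le (xc := Ip (rinv rsm)) hp hs hω (by positivity) (by positivity)
    (by positivity) (hPIp xsm) ?_ ?_ (by nlinarith)
  · rw [div_mul_eq_mul_div, le_div_iff₀ hcs]; linarith
  · rw [hxsm, norm_sub_rev] at hQbar
    rw [mul_assoc]; exact hQbar.trans (by gcongr)

end SecondStep

theorem stmt_9_general (p s b γ cs cψ Cψ CP CtQ CbarQ Cη τl τu β Cb : ℝ)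
    (hp : 1 ≤ p) (hs : 1 ≤ s) (hb1 : b < 1)
    (hcs : 0 < cs) (hCψ : 1 ≤ Cψ) (hγ : Cψ < γ)
    (hCtQ : 0 < CtQ) (hCbarQ : 0 < CbarQ) (hCη : 0 < Cη)
    (hτl : 0 < τl) (hβ : 0 < β)
    (hCb : Cb = (2 : ℝ) ^ (2 * p - 2) * Cψ) :
    ∃ C C' : ℝ, 0 < C ∧ 0 < C' ∧
      ∀ {X : Type u} {Xt : Type v} {Y : Type w}
      [NormedAddCommGroup X] [NormedSpace ℝ X]
      [NormedAddCommGroup Xt] [NormedSpace ℝ Xt]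
      [NormedAddCommGroup Y] [NormedSpace ℝ Y]
    
    (Xc : Submodule ℝ X) (U : Set X) (x0 xd : X)
    (hx0U : x0 ∈ U) (hx0c : x0 ∈ Xc) (hxdU : xd ∈ U) (hxdc : xd ∈ Xc)
    (F : X → Y) (K : Xt →L[ℝ] Y)
    (r : X → Xt) (rinv : Xt → X)
    (hrleft : ∀ x ∈ U, rinv (r x) = x)
    (hrmem : ∀ v : Xt, rinv v ∈ U) (hrright : ∀ v : Xt, r (rinv v) = v)
    (Lr : ℝ) (hLr : ∀ x1 ∈ U, ∀ x2 ∈ U, ‖r x1 - r x2‖ ≤ Lr * ‖x1 - x2‖)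
    (hRI : ∀ x ∈ U, F x - F x0 = K (r x))
    (P Ip : X → X) (hPIp : ∀ x, P x = x - Ip x)
    (hIpXc : ∀ x, Ip x ∈ Xc)
    (hPxd : P xd = 0) (hPx0 : P x0 = 0)
    (hIprinvU : ∀ v : Xt, Ip (rinv v) ∈ U)
    (δ : ℝ) (hδ : 0 < δ) (yδ : Y) (hnoise : ‖F xd - yδ‖ ≤ δ)
    (Rc : X → ℝ) (hRcnn : ∀ x, 0 ≤ Rc x)
    (ξ : X →L[ℝ] ℝ) (hξ : ∀ xc ∈ Xc, ξ (xc - xd) ≤ Rc xc - Rc xd)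
    (ψ : ℝ → ℝ) (hψcont : ContinuousOn ψ (Set.Ici (0 : ℝ)))
    (hψmono : MonotoneOn ψ (Set.Ici (0 : ℝ)))
    (hψ0 : ψ 0 = 0) (hψnn : ∀ t : ℝ, 0 ≤ t → 0 ≤ ψ t)
    (hVSC : ∀ xc, xc ∈ Xc → xc ∈ U →
      -(ξ (xc - xd)) ≤ b * (Rc xc - Rc xd - ξ (xc - xd)) + ψ (‖K (r xc - r xd)‖ ^ p))
      (hψstrict : StrictMonoOn ψ (Set.Ici (0 : ℝ)))
      (hψlow : ∀ t : ℝ, 0 < t → cψ * t ≤ ψ t)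
      (hψsub : ∀ a c : ℝ, 0 ≤ a → 0 ≤ c → ψ (a + c) ≤ Cψ * (ψ a + ψ c))
      (hsconv : ∀ xc ∈ Xc, cs * ‖xc - xd‖ ^ s ≤ Rc xc - Rc xd - ξ (xc - xd))
      (Q : Xt → Xt → ℝ) (hQnn : ∀ v1 v2, 0 ≤ Q v1 v2) (hQdiag : ∀ v, Q v v = 0)
      (RP : X → ℝ) (hRP0 : RP 0 = 0) (hRPnn : ∀ v, 0 ≤ RP v)
      (hCP : (2 : ℝ) ^ (p - 1) * ‖K‖ ^ p * Lr ^ p ≤ CP)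
      (hRPlb : ∀ v : X, γ * ψ (CP * ‖v‖ ^ p) ≤ RP v)
      (hQt : ∀ v : Xt, Q (r xd) v ^ p ≤
        CtQ * ((Rc (Ip (rinv v)) - Rc xd - ξ (Ip (rinv v) - xd)) +
          ψ (CP * ‖P (rinv v)‖ ^ p)))
      (hQbar1 : ∀ v1 v2 : Xt,
        ‖Ip (rinv v2) - Ip (rinv v1)‖ ^ s ≤ CbarQ * Q v1 v2 ^ p)
      (hQbar2 : ∀ v1 v2 : Xt,
        cψ * CP * ‖P (rinv v2) - P (rinv v1)‖ ^ p ≤ CbarQ * Q v1 v2 ^ p)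
      (α η : ℝ) (hα : 0 < α) (hαβ : α ≤ β)
      (hη0 : 0 ≤ η) (hη : η ≤ Cη * δ ^ p)
      (hfin : negConj ψ (-(1 / (Cb * α))) ≠ ⊤)
      (hpar1 : ((τl * δ ^ p : ℝ) : EReal) ≤ (α : ℝ) * negConj ψ (-(1 / (2 * Cb * α))))
      (hpar2 : ((α : ℝ) : EReal) * negConj ψ (-(1 / (2 * Cb * α))) ≤ ((τu * δ ^ p : ℝ) : EReal))
      (Jα : Xt → ℝ)
      (hJα : ∀ v, Jα v = ‖K v + F x0 - yδ‖ ^ p +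
        α * (Rc (Ip (rinv v)) + RP (P (rinv v))))
      (Jβ : Xt → X → ℝ)
      (hJβ : ∀ v x, Jβ v x = β * Q (r x) v ^ p + ‖P x‖ ^ p)
      (rsm : Xt) (xsm : X) (_ : xsm ∈ U)
      (hmin1 : ∀ v : Xt, Jα rsm ≤ Jα v + η)
      (hmin2 : ∀ x ∈ U, Jβ rsm xsm ≤ Jβ rsm x + η)
      (t : ℝ), 0 ≤ t →
      ψ t = C * (negConj ψ (-(1 / (2 * Cb * α)))).toReal →
      ‖xsm - xd‖ ≤ C' * ((negConj ψ (-(1 / (2 * Cb * α)))).toReal ^ (1 / s) +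
        (negConj ψ (-(1 / (2 * Cb * α)))).toReal ^ (1 / p) + t ^ (1 / p)) := by
  set κ := ((3 / 2 + Cη) / τl + Cψ) / min (1 - b) (γ - Cψ)
  set μ := CtQ * κ + Cη / τl
  set C' := (κ / cs) ^ (1 / s) + (CbarQ * μ) ^ (1 / s) + (β * μ) ^ (1 / p)
  have hκ0 : 0 < κ := by positivity
  have hC'0 : 0 < C' := by positivity
  refine ⟨1, C', one_pos, hC'0, ?_⟩
  intro X Xt Y _ _ _ _ _ _ Xc U x0 xd _ _ hxdU _ F K r rinv hrleft hrmem hrright Lr hLr hRI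
    P Ip hPIp hIpXc hPxd _ hIprinvU δ _ yδ hnoise Rc _ ξ hξ ψ _ hψmono hψ0 hψnn hVSC _ _ hψsub
    hsconv Q hQnn _ RP hRP0 _ hCP hRPlb hQt hQbar1 _ α η hα hαβ _ hη _ hpar1 hpar2 Jα hJα Jβ hJβ
    rsm xsm hxsmU hmin1 hmin2 t ht _
  set ω := (negConj ψ (-(1 / (2 * Cb * α)))).toReal
  have hω0 : 0 ≤ ω := EReal.toReal_nonneg (negConj_nonneg hψ0 _)
  obtain hLrneg | hLr0 := lt_or_ge Lr 0
  · rw [eq_of_norm_le_mul_norm_sub_of_neg hLrneg (hLr xsm hxsmU xd hxdU), sub_self, norm_zero]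
    exact mul_nonneg hC'0.le (by positivity)
  have hδω : τl * δ ^ p ≤ α * ω := EReal.le_mul_toReal_of_le_coe_mul hpar1 hpar2
  have hYoung : ∀ T, 0 ≤ T → ψ T ≤ 1 / (2 * (2 ^ (2 * p - 2) * Cψ) * α) * T + ω := by
    rw [← hCb]
    exact fun T hT => le_mul_add_toReal_negConj (EReal.ne_top_of_coe_mul_le hα hpar2) hT
  have hCP0 : 0 ≤ CP := le_trans (by positivity) hCP
  have hfirst := tikhonov_step_rate hp hb1 (by linarith) hγ hCη.le hτl hα hLr0 hLr hCP
    (hrleft xd hxdU) (hrmem rsm) (hrright rsm) (hRI xd hxdU) hPIp hPxd (hIprinvU rsm) hnoise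
    (hξ _ (hIpXc _)) hψmono hψnn hψsub hYoung (hVSC _ (hIpXc _) (hIprinvU rsm)) hRP0 (hRPlb _)
    hJα (hmin1 (r xd)) hδω hη
  calc ‖xsm - xd‖ ≤ C' * (ω ^ (1 / s) + ω ^ (1 / p)) :=
        reconstruction_step_rate (by linarith) (by linarith) hβ hκ0.le hCη.le hτl hcs hCtQ.le
          hCbarQ.le hω0 hPIp hPxd (hrleft xsm hxsmU) hQnn (hψnn _ (by positivity)) hfirst
          (hsconv _ (hIpXc _)) (hQt rsm) (hQbar1 _ _) hJβ (hmin2 xd hxdU) hη hδω hαβ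
    _ ≤ C' * (ω ^ (1 / s) + ω ^ (1 / p) + t ^ (1 / p)) :=
      mul_le_mul_of_nonneg_left (le_add_of_nonneg_right (by positivity)) hC'0.le

/-- Convergence rate of the split minimization reconstruction `x_sm` to `x†`
(Corollary 2.6): with `ω = (−ψ)*(−1/(2C̄α))`, whenever `C·ω` lies in the range of `ψ`,
`‖x_sm − x†‖ ≤ C'·(ω^{1/s} + ω^{1/p} + ψ⁻¹(C·ω)^{1/p})`, with constants depending only
on `p, s, b, γ, c_s, c_ψ, C_ψ, C_P, C̃_Q, C̄_Q, C_η, τ̲, τ̄, β`. -/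
theorem stmt_9 (p s b γ cs cψ Cψ CP CtQ CbarQ Cη τl τu β Cb : ℝ)
    (hp : 1 ≤ p) (hs : 1 ≤ s) (hb0 : 0 < b) (hb1 : b < 1)
    (hcs : 0 < cs) (hcψ : 0 < cψ) (hCψ : 1 ≤ Cψ) (hγ : Cψ < γ)
    (hCtQ : 0 < CtQ) (hCbarQ : 0 < CbarQ) (hCη : 0 < Cη)
    (hτl : 0 < τl) (hτlu : τl ≤ τu) (hβ : 0 < β)
    (hCb : Cb = (2 : ℝ) ^ (2 * p - 2) * Cψ) :
    ∃ C C' : ℝ, 0 < C ∧ 0 < C' ∧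
      ∀ {X : Type u} {Xt : Type v} {Y : Type w}
      [NormedAddCommGroup X] [NormedSpace ℝ X]
      [NormedAddCommGroup Xt] [NormedSpace ℝ Xt]
      [NormedAddCommGroup Y] [NormedSpace ℝ Y]
    
    (Xc : Submodule ℝ X) (U : Set X) (x0 xd : X)
    (hx0U : x0 ∈ U) (hx0c : x0 ∈ Xc) (hxdU : xd ∈ U) (hxdc : xd ∈ Xc)
    (F : X → Y) (K : Xt →L[ℝ] Y)
    (r : X → Xt) (rinv : Xt → X)
    (hrleft : ∀ x ∈ U, rinv (r x) = x)
    (hrmem : ∀ v : Xt, rinv v ∈ U) (hrright : ∀ v : Xt, r (rinv v) = v)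
    (Lr : ℝ) (hLr : ∀ x1 ∈ U, ∀ x2 ∈ U, ‖r x1 - r x2‖ ≤ Lr * ‖x1 - x2‖)
    (hRI : ∀ x ∈ U, F x - F x0 = K (r x))
    (P Ip : X → X) (hPIp : ∀ x, P x = x - Ip x)
    (hIpXc : ∀ x, Ip x ∈ Xc)
    (hPxd : P xd = 0) (hPx0 : P x0 = 0)
    (hIprinvU : ∀ v : Xt, Ip (rinv v) ∈ U)
    (δ : ℝ) (hδ : 0 < δ) (yδ : Y) (hnoise : ‖F xd - yδ‖ ≤ δ)
    (Rc : X → ℝ) (hRcnn : ∀ x, 0 ≤ Rc x)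
    (ξ : X →L[ℝ] ℝ) (hξ : ∀ xc ∈ Xc, ξ (xc - xd) ≤ Rc xc - Rc xd)
    (ψ : ℝ → ℝ) (hψcont : ContinuousOn ψ (Set.Ici (0 : ℝ)))
    (hψmono : MonotoneOn ψ (Set.Ici (0 : ℝ)))
    (hψ0 : ψ 0 = 0) (hψnn : ∀ t : ℝ, 0 ≤ t → 0 ≤ ψ t)
    (hVSC : ∀ xc, xc ∈ Xc → xc ∈ U →
      -(ξ (xc - xd)) ≤ b * (Rc xc - Rc xd - ξ (xc - xd)) + ψ (‖K (r xc - r xd)‖ ^ p))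
      (hψstrict : StrictMonoOn ψ (Set.Ici (0 : ℝ)))
      (hψlow : ∀ t : ℝ, 0 < t → cψ * t ≤ ψ t)
      (hψsub : ∀ a c : ℝ, 0 ≤ a → 0 ≤ c → ψ (a + c) ≤ Cψ * (ψ a + ψ c))
      (hsconv : ∀ xc ∈ Xc, cs * ‖xc - xd‖ ^ s ≤ Rc xc - Rc xd - ξ (xc - xd))
      (Q : Xt → Xt → ℝ) (hQnn : ∀ v1 v2, 0 ≤ Q v1 v2) (hQdiag : ∀ v, Q v v = 0)
      (RP : X → ℝ) (hRP0 : RP 0 = 0) (hRPnn : ∀ v, 0 ≤ RP v)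
      (hCP : (2 : ℝ) ^ (p - 1) * ‖K‖ ^ p * Lr ^ p ≤ CP)
      (hRPlb : ∀ v : X, γ * ψ (CP * ‖v‖ ^ p) ≤ RP v)
      (hQt : ∀ v : Xt, Q (r xd) v ^ p ≤
        CtQ * ((Rc (Ip (rinv v)) - Rc xd - ξ (Ip (rinv v) - xd)) +
          ψ (CP * ‖P (rinv v)‖ ^ p)))
      (hQbar1 : ∀ v1 v2 : Xt,
        ‖Ip (rinv v2) - Ip (rinv v1)‖ ^ s ≤ CbarQ * Q v1 v2 ^ p)
      (hQbar2 : ∀ v1 v2 : Xt,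
        cψ * CP * ‖P (rinv v2) - P (rinv v1)‖ ^ p ≤ CbarQ * Q v1 v2 ^ p)
      (α η : ℝ) (hα : 0 < α) (hαβ : α ≤ β)
      (hη0 : 0 ≤ η) (hη : η ≤ Cη * δ ^ p)
      (hfin : negConj ψ (-(1 / (Cb * α))) ≠ ⊤)
      (hpar1 : ((τl * δ ^ p : ℝ) : EReal) ≤ (α : ℝ) * negConj ψ (-(1 / (2 * Cb * α))))
      (hpar2 : ((α : ℝ) : EReal) * negConj ψ (-(1 / (2 * Cb * α))) ≤ ((τu * δ ^ p : ℝ) : EReal))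
      (Jα : Xt → ℝ)
      (hJα : ∀ v, Jα v = ‖K v + F x0 - yδ‖ ^ p +
        α * (Rc (Ip (rinv v)) + RP (P (rinv v))))
      (Jβ : Xt → X → ℝ)
      (hJβ : ∀ v x, Jβ v x = β * Q (r x) v ^ p + ‖P x‖ ^ p)
      (rsm : Xt) (xsm : X) (_ : xsm ∈ U)
      (hmin1 : ∀ v : Xt, Jα rsm ≤ Jα v + η)
      (hmin2 : ∀ x ∈ U, Jβ rsm xsm ≤ Jβ rsm x + η)
      (t : ℝ), 0 ≤ t →
      ψ t = C * (negConj ψ (-(1 / (2 * Cb * α)))).toReal →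
      ‖xsm - xd‖ ≤ C' * ((negConj ψ (-(1 / (2 * Cb * α)))).toReal ^ (1 / s) +
        (negConj ψ (-(1 / (2 * Cb * α)))).toReal ^ (1 / p) + t ^ (1 / p)) :=
  stmt_9_general p s b γ cs cψ Cψ CP CtQ CbarQ Cη τl τu β Cb hp hs hb1 hcs hCψ hγ hCtQ hCbarQ hCη
    hτl hβ hCb
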